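/- arXiv:2412.13345 — 5 statements merged into one kernel-verified Lean document; each statement's English description precedes it below -/
import Mathlib

section
/- Let G=(V,E) be a connected undirected graph on [n], let P be an all-pairs set of paths for G with vertex congestion at most g, and let L≥2 be an integer. Let x∈{1}×[n]^L be good and let v∈[n]. Then Σ_{j=1}^{L} n^j·|T_j| ≤ g·n^L + L²·g·n^{L−1}. -/
open Finset

/-- An all-pairs set of simple paths in `G`, with `P^{u,u}` the trivial path. -/
structure PathSystem {n : ℕ} (G : SimpleGraph (Fin n)) where
  path : ∀ u v : Fin n, G.Walk u v
  isPath : ∀ u v : Fin n, (path u v).IsPath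
  diag : ∀ u : Fin n, path u u = SimpleGraph.Walk.nil

/-- Vertex congestion of a path system: max over vertices of total occurrences. -/
def PathSystem.congestion {n : ℕ} {G : SimpleGraph (Fin n)} (P : PathSystem G) : ℕ :=
  Finset.univ.sup fun w : Fin n =>
    ∑ u : Fin n, ∑ v : Fin n, (P.path u v).support.count w

/-- Support of the `i`-th quasi-segment `P^{x_i, x_{i+1}}` (0-based). -/
def segSupport {n L : ℕ} {G : SimpleGraph (Fin n)} (P : PathSystem G)
    (x : Fin (L + 1) → Fin n) (i : ℕ) : List (Fin n) :=
  (P.path (x ⟨min i L, by omega⟩) (x ⟨min (i + 1) L, by omega⟩)).support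

/-- Support of the staircase walk `P^{x_j,x_{j+1}} ∘ ⋯ ∘ P^{x_{L-1},x_L}` (0-based `j`). -/
def stairSupportFrom {n L : ℕ} {G : SimpleGraph (Fin n)} (P : PathSystem G)
    (x : Fin (L + 1) → Fin n) (j : ℕ) : List (Fin n) :=
  x ⟨min j L, by omega⟩ ::
    (List.ofFn fun k : Fin (L - j) =>
      (P.path (x ⟨j + k, by have := k.isLt; omega⟩)
              (x ⟨j + k + 1, by have := k.isLt; omega⟩)).support.tail).flatten

/-- `Tail(j, S_x)` (0-based `j`): the staircase from `x_j` with the first occurrence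
of `x_j` removed. -/
def tailSupport {n L : ℕ} {G : SimpleGraph (Fin n)} (P : PathSystem G)
    (x : Fin (L + 1) → Fin n) (j : ℕ) : List (Fin n) :=
  (stairSupportFrom P x j).erase (x ⟨min j L, by omega⟩)

/-- Largest 0-based index `i` such that the prefixes `x_0 … x_i` and `y_0 … y_i` agree
(`J_{x,y} - 1` in 1-based notation). -/
def J0 {n L : ℕ} (x y : Fin (L + 1) → Fin n) : ℕ :=
  (Finset.univ.filter fun i : Fin (L + 1) => ∀ k ≤ i, x k = y k).sup fun i => (i : ℕ)

/-- `q_v(u)`: the number of paths in `P` starting at `u` that contain `v`. -/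
def qcount {n : ℕ} {G : SimpleGraph (Fin n)} (P : PathSystem G) (v u : Fin n) : ℕ :=
  (Finset.univ.filter fun w : Fin n => v ∈ (P.path u w).support).card

/-- Largest 0-based index `i` with `v ∈ P^{x_i,x_{i+1}}`. -/
def maxSegIdx {n L : ℕ} {G : SimpleGraph (Fin n)} (P : PathSystem G)
    (x : Fin (L + 1) → Fin n) (v : Fin n) : ℕ :=
  ((Finset.range L).filter fun i => v ∈ segSupport P x i).sup id

/-- The function `f_x`. -/
noncomputable def fS {n L : ℕ} {G : SimpleGraph (Fin n)} (P : PathSystem G)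
    (x : Fin (L + 1) → Fin n) (v : Fin n) : ℤ :=
  if v ∈ stairSupportFrom P x 0 then
    -(((maxSegIdx P x v : ℤ) + 1) * n) - (((segSupport P x (maxSegIdx P x v)).idxOf v : ℤ) + 1)
  else (G.dist v (x 0) : ℤ)

/-- The function `g_{x,b}`. -/
noncomputable def gS {n L : ℕ} {G : SimpleGraph (Fin n)} (P : PathSystem G)
    (x : Fin (L + 1) → Fin n) (b : ℤ) (v : Fin n) : ℤ × ℤ :=
  if v = x (Fin.last L) then (fS P x v, b) else (fS P x v, -1)

/-- The relation `r*`. -/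
noncomputable def rstar {n L : ℕ} (x y : Fin (L + 1) → Fin n) (b1 b2 : ℤ) : ℝ :=
  if b1 = b2 ∨ ¬ Function.Injective x ∨ ¬ Function.Injective y then 0
  else (n : ℝ) ^ (J0 x y + 1)

/-- The relation `r`. -/
noncomputable def rrel {n L : ℕ} (x y : Fin (L + 1) → Fin n) (b1 b2 : ℤ) : ℝ :=
  if x = y then 0 else rstar x y b1 b2

/-- The relation `r'`. -/
noncomputable def rprime {n L : ℕ} {G : SimpleGraph (Fin n)} (P : PathSystem G) (g : ℕ)
    (x y : Fin (L + 1) → Fin n) (b1 b2 : ℤ) (v : Fin n) : ℝ :=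
  if gS P x b1 v = gS P y b2 v ∨ b1 = b2 then 0
  else if v ∈ tailSupport P x (J0 x y) ∧ v ∉ tailSupport P y (J0 x y) then
    rrel x y b1 b2 * g / (n : ℝ) ^ (1.5 : ℝ)
  else if v ∈ tailSupport P y (J0 x y) ∧ v ∉ tailSupport P x (J0 x y) then
    rrel x y b1 b2 * (n : ℝ) ^ (1.5 : ℝ) / g
  else rrel x y b1 b2

/-- The vertex congestion of the graph `G`. -/
noncomputable def vertexCongestion {n : ℕ} (G : SimpleGraph (Fin n)) : ℕ :=
  sInf {c | ∃ P : PathSystem G, P.congestion = c}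

/-- The number of cut edges `|E(S, V∖S)|`. -/
def cutEdges {n : ℕ} (G : SimpleGraph (Fin n)) [DecidableRel G.Adj]
    (S : Finset (Fin n)) : ℕ :=
  ((S ×ˢ Sᶜ).filter fun p => G.Adj p.1 p.2).card

/-! Each `y ∈ T_j` agrees with `x` up to index `j` and has `v` on some segment
`P^{y_k, y_{k+1}}` with `k ≥ j`. For `k = j` the segment starts at `x_j`, so `y_{j+1}` is one of
the `q_v(x_j)` endpoints of paths from `x_j` through `v`, and the `L - 1 - j` later entries are
free. For `k > j` the pair `(y_k, y_{k+1})` is one of at most `g` pairs whose path meets `v`, and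
the `L - 2 - j` entries other than `y_0, …, y_j, y_k, y_{k+1}` are free. Multiplied by `n^{j+1}`
(0-based `j`), the case `k = j` contributes `q_v(x_j) n^L` and each of the fewer than `L` others
`g n^{L-1}`; finally `∑_j q_v(x_j) ≤ g` because the `x_j` are distinct. -/

lemma Finset.card_le_card_mul_pow_of_determined {ι α β : Type*} [Fintype α]
    {s : Finset (ι → α)} {A : Finset β} (f : (ι → α) → β) (t : Finset ι)
    (hf : ∀ y ∈ s, f y ∈ A)
    (hdet : ∀ y ∈ s, ∀ y' ∈ s, f y = f y' → (∀ i ∈ t, y i = y' i) → y = y') :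
    #s ≤ #A * Fintype.card α ^ #t := by
  classical
  calc #s ≤ #(A ×ˢ (univ : Finset (t → α))) := by
        refine card_le_card_of_injOn (fun y => (f y, fun i => y i))
          (fun y hy => mem_product.2 ⟨hf y hy, mem_univ _⟩) ?_
        intro y hy y' hy' h
        simp only [Prod.mk.injEq, funext_iff, Subtype.forall] at h
        exact hdet y hy y' hy' h.1 h.2
    _ = #A * Fintype.card α ^ #t := by simp

section

variable {n L : ℕ} {G : SimpleGraph (Fin n)} (P : PathSystem G)

lemma sum_qcount_le_congestion (v : Fin n) : ∑ u, qcount P v u ≤ P.congestion := by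
  have hq (u : Fin n) : qcount P v u = ∑ w, (P.path u w).support.count v := by
    rw [qcount, card_filter]
    refine sum_congr rfl fun w _ => ?_
    split_ifs with hv
    · exact (List.count_eq_one_of_mem (P.isPath u w).support_nodup hv).symm
    · exact (List.count_eq_zero_of_not_mem hv).symm
  simp only [hq]
  exact le_sup (f := fun w => ∑ u, ∑ u', (P.path u u').support.count w) (mem_univ v)

lemma sum_qcount_comp_le_congestion {m : ℕ} {x : Fin m → Fin n} (hx : Function.Injective x)
    (v : Fin n) : ∑ j, qcount P v (x j) ≤ P.congestion :=
  calc ∑ j, qcount P v (x j) = ∑ u ∈ univ.map ⟨x, hx⟩, qcount P v u := by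
        rw [sum_map]; rfl
    _ ≤ ∑ u, qcount P v u := sum_le_sum_of_subset (subset_univ _)
    _ ≤ P.congestion := sum_qcount_le_congestion P v

lemma eq_of_le_J0 {x y : Fin (L + 1) → Fin n} (h0 : x 0 = y 0) {i : Fin (L + 1)}
    (hi : (i : ℕ) ≤ J0 x y) : x i = y i := by
  have h0mem : (0 : Fin (L + 1)) ∈ univ.filter fun i => ∀ k ≤ i, x k = y k := by
    simp [h0]
  obtain ⟨i', hi', hsup⟩ := exists_mem_eq_sup _ ⟨0, h0mem⟩ fun i : Fin (L + 1) => (i : ℕ)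
  rw [J0, hsup] at hi
  exact (mem_filter.1 hi').2 i hi

lemma exists_mem_path_of_mem_tailSupport {y : Fin (L + 1) → Fin n} {v : Fin n} {j : ℕ}
    (hv : v ∈ tailSupport P y j) :
    ∃ k : Fin L, j ≤ k ∧ v ∈ (P.path (y k.castSucc) (y k.succ)).support := by
  simp only [tailSupport, stairSupportFrom, List.erase_cons_head, List.mem_flatten,
    List.mem_ofFn] at hv
  obtain ⟨_, ⟨k, rfl⟩, hvk⟩ := hv
  exact ⟨⟨j + k, by omega⟩, by simp, List.mem_of_mem_tail hvk⟩

def segThrough (x : Fin (L + 1) → Fin n) (v : Fin n) (j k : Fin L) :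
    Finset (Fin (L + 1) → Fin n) :=
  univ.filter fun y => (∀ i ≤ j.castSucc, y i = x i) ∧
    v ∈ (P.path (y k.castSucc) (y k.succ)).support

variable {P} {x : Fin (L + 1) → Fin n} {v : Fin n} {j k : Fin L}

lemma mem_segThrough {y : Fin (L + 1) → Fin n} :
    y ∈ segThrough P x v j k ↔ (∀ i ≤ j.castSucc, y i = x i) ∧
      v ∈ (P.path (y k.castSucc) (y k.succ)).support := by
  simp [segThrough]

variable (P x v)

lemma pow_mul_card_segThrough_le (hjk : j < k) :
    n ^ (j + 1 : ℕ) * #(segThrough P x v j k) ≤ (∑ u, qcount P v u) * n ^ (L - 1) := by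
  have hpairs : #(univ.filter fun p : Fin n × Fin n => v ∈ (P.path p.1 p.2).support) =
      ∑ u, qcount P v u := by
    rw [card_filter, Fintype.sum_prod_type]
    simp only [qcount, card_filter]
  have hfree : #(Ioi j.castSucc \ {k.castSucc, k.succ}) = L - (j + 1) - 1 := by
    have hsub : {k.castSucc, k.succ} ⊆ Ioi j.castSucc := by
      have hjk' : j.castSucc < k.castSucc := Fin.castSucc_lt_castSucc_iff.2 hjk
      simp [insert_subset_iff, hjk', hjk'.trans Fin.castSucc_lt_succ]
    rw [card_sdiff_of_subset hsub, card_pair (Fin.castSucc_lt_succ (i := k)).ne]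
    simp only [Fin.card_Ioi, add_tsub_cancel_right, Fin.val_castSucc]
    omega
  have hcard : #(segThrough P x v j k) ≤ (∑ u, qcount P v u) * n ^ (L - (j + 1) - 1) := by
    refine (card_le_card_mul_pow_of_determined (fun y => (y k.castSucc, y k.succ))
      (Ioi j.castSucc \ {k.castSucc, k.succ})
      (A := univ.filter fun p : Fin n × Fin n => v ∈ (P.path p.1 p.2).support) ?_ ?_).trans_eq
      (by simp [hpairs, hfree])
    · intro y hy
      simpa using (mem_segThrough.1 hy).2
    · intro y hy y' hy' hseg hrest
      simp only [Prod.mk.injEq] at hseg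
      funext i
      by_cases hi : i ≤ j.castSucc
      · rw [(mem_segThrough.1 hy).1 i hi, (mem_segThrough.1 hy').1 i hi]
      by_cases hik : i = k.castSucc
      · exact hik ▸ hseg.1
      by_cases hik' : i = k.succ
      · exact hik' ▸ hseg.2
      exact hrest i (by simp_all)
  calc n ^ (j + 1 : ℕ) * #(segThrough P x v j k)
      ≤ n ^ (j + 1 : ℕ) * ((∑ u, qcount P v u) * n ^ (L - (j + 1) - 1)) := by gcongr
    _ = (∑ u, qcount P v u) * n ^ (L - 1) := by
      rw [mul_left_comm, ← pow_add]
      congr 2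
      omega

variable (j)

lemma pow_mul_card_segThrough_self_le :
    n ^ (j + 1 : ℕ) * #(segThrough P x v j j) ≤ qcount P v (x j.castSucc) * n ^ L := by
  have hcard : #(segThrough P x v j j) ≤ qcount P v (x j.castSucc) * n ^ (L - (j + 1)) := by
    refine (card_le_card_mul_pow_of_determined (fun y => y j.succ) (Ioi j.succ)
      (A := univ.filter fun w => v ∈ (P.path (x j.castSucc) w).support) ?_ ?_).trans_eq
      (by simp [qcount])
    · intro y hy
      obtain ⟨hpre, hv⟩ := mem_segThrough.1 hy
      rw [mem_filter, ← hpre j.castSucc le_rfl]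
      exact ⟨mem_univ _, hv⟩
    · intro y hy y' hy' hsucc hrest
      funext i
      rcases lt_trichotomy i j.succ with hi | rfl | hi
      · have hi : i ≤ j.castSucc := Fin.le_castSucc_iff.2 hi
        rw [(mem_segThrough.1 hy).1 i hi, (mem_segThrough.1 hy').1 i hi]
      · exact hsucc
      · exact hrest i (mem_Ioi.2 hi)
  calc n ^ (j + 1 : ℕ) * #(segThrough P x v j j)
      ≤ n ^ (j + 1 : ℕ) * (qcount P v (x j.castSucc) * n ^ (L - (j + 1))) := by gcongr
    _ = qcount P v (x j.castSucc) * n ^ L := by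
      rw [mul_left_comm, ← pow_add, Nat.add_sub_cancel' j.isLt]

lemma filter_mem_tailSupport_subset_biUnion :
    (univ.filter fun y : Fin (L + 1) → Fin n =>
        y 0 = x 0 ∧ J0 x y = j ∧ v ∈ tailSupport P y j) ⊆
      (Ici j).biUnion (segThrough P x v j) := by
  intro y hy
  obtain ⟨hy0, hJ, hv⟩ := (mem_filter.1 hy).2
  obtain ⟨k, hjk, hvk⟩ := exists_mem_path_of_mem_tailSupport P hv
  refine mem_biUnion.2 ⟨k, mem_Ici.2 (Fin.le_iff_val_le_val.2 hjk), mem_segThrough.2 ⟨?_, hvk⟩⟩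
  intro i hi
  exact (eq_of_le_J0 hy0.symm (hJ ▸ hi)).symm

lemma pow_mul_card_filter_mem_tailSupport_le :
    n ^ (j + 1 : ℕ) * #(univ.filter fun y : Fin (L + 1) → Fin n =>
        y 0 = x 0 ∧ J0 x y = j ∧ v ∈ tailSupport P y j) ≤
      qcount P v (x j.castSucc) * n ^ L + L * P.congestion * n ^ (L - 1) :=
  calc _ ≤ n ^ (j + 1 : ℕ) * ∑ k ∈ Ici j, #(segThrough P x v j k) := by
        gcongr
        exact (card_le_card (filter_mem_tailSupport_subset_biUnion P x v j)).trans
          card_biUnion_le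
    _ = n ^ (j + 1 : ℕ) * #(segThrough P x v j j) +
          ∑ k ∈ Ioi j, n ^ (j + 1 : ℕ) * #(segThrough P x v j k) := by
        rw [← Ioi_insert, sum_insert notMem_Ioi_self, mul_add, mul_sum]
    _ ≤ qcount P v (x j.castSucc) * n ^ L + ∑ k ∈ Ioi j, P.congestion * n ^ (L - 1) := by
        refine add_le_add (pow_mul_card_segThrough_self_le P x v j) (sum_le_sum fun k hk => ?_)
        exact (pow_mul_card_segThrough_le P x v (mem_Ioi.1 hk)).trans
          (Nat.mul_le_mul_right _ (sum_qcount_le_congestion P v))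
    _ ≤ qcount P v (x j.castSucc) * n ^ L + L * P.congestion * n ^ (L - 1) := by
        rw [sum_const, smul_eq_mul, mul_assoc]
        gcongr
        exact (card_le_univ _).trans_eq (Fintype.card_fin L)

end

theorem stmt0 {n L g : ℕ} (hn : 2 ≤ n)
    (G : SimpleGraph (Fin n))
    (P : PathSystem G) (hg : P.congestion ≤ g)
    (x : Fin (L + 1) → Fin n) (hx1 : x 0 = ⟨0, by omega⟩)
    (hxgood : Function.Injective x) (v : Fin n) :
    ∑ j ∈ Finset.range L,
        n ^ (j + 1) *
          (Finset.univ.filter fun y : Fin (L + 1) → Fin n =>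
              y 0 = (⟨0, by omega⟩ : Fin n) ∧ J0 x y = j ∧ v ∈ tailSupport P y j).card
      ≤ g * n ^ L + L ^ 2 * g * n ^ (L - 1) := by
  rw [← hx1, ← Fin.sum_univ_eq_sum_range]
  calc _ ≤ ∑ j : Fin L, (qcount P v (x j.castSucc) * n ^ L + L * P.congestion * n ^ (L - 1)) :=
        sum_le_sum fun j _ => pow_mul_card_filter_mem_tailSupport_le P x v j
    _ = (∑ j : Fin L, qcount P v (x j.castSucc)) * n ^ L +
          L ^ 2 * P.congestion * n ^ (L - 1) := by
        rw [sum_add_distrib, ← sum_mul, sum_const, card_univ, Fintype.card_fin, smul_eq_mul]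
        ring
    _ ≤ g * n ^ L + L ^ 2 * g * n ^ (L - 1) := by
        gcongr
        exact (sum_qcount_comp_le_congestion P (hxgood.comp (Fin.castSucc_injective L)) v).trans hg
end

section
/- Let G be a connected undirected graph on [n] with n≥4, let P be an all-pairs set of paths for G, and let L be an integer with 2≤L≤√n. If x∈{1}×[n]^L is good and b1∈{0,1}, then Σ_{F∈X} r*(g_{x,b1},F) ≥ (1/(2e))·(L+1)·n^{L+1}. -/
open Finset

/-!
Since `n ^ (J + 1) ≥ (n - 1) (1 + n + ⋯ + n ^ J)`, the sum is at least `∑ⱼ (n - 1) nʲ Nⱼ`,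
where `Nⱼ` counts the good `y` sharing the prefix `x₀, …, xⱼ` with `x`. Such `y` are obtained by
choosing the remaining `L - j` entries injectively outside that prefix, so
`Nⱼ ≥ (n - j - 1) ⋯ (n - L) ≥ (n - L) ^ (L - j)`. Bernoulli's inequality and `L² ≤ n` then bound
the total below by `(L + 1) nᴸ (n - 1 - L² / 2) ≥ (L + 1) nᴸ⁺¹ / 4 ≥ (L + 1) nᴸ⁺¹ / (2e)`.
-/

lemma sum_range_sub_one_mul_pow_le {R : Type*} [CommRing R] [PartialOrder R] [IsOrderedRing R]
    (a : R) (k : ℕ) : ∑ j ∈ range k, (a - 1) * a ^ j ≤ a ^ k := by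
  rw [← mul_sum, mul_comm, geom_sum_mul]
  exact sub_le_self _ zero_le_one

lemma pow_mul_sub_le_mul_sub_pow {a : ℝ} (b : ℝ) (ha : 0 < a) (hb : b ≤ 2 * a) (m : ℕ) :
    a ^ m * (a - m * b) ≤ a * (a - b) ^ m := by
  have hBernoulli := one_add_mul_le_pow (a := -(b / a))
    (by rw [neg_le_neg_iff, div_le_iff₀ ha]; linarith) m
  have hlhs : a ^ (m + 1) * (1 + m * -(b / a)) = a ^ m * (a - m * b) := by
    field_simp; ring
  have hrhs : a ^ (m + 1) * (1 + -(b / a)) ^ m = a * (a - b) ^ m := by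
    rw [show (1 : ℝ) + -(b / a) = (a - b) / a by field_simp; ring, div_pow, pow_succ']
    field_simp
  rw [← hlhs, ← hrhs]
  exact mul_le_mul_of_nonneg_left hBernoulli (pow_nonneg ha.le _)

section Prefix

variable {α : Type*} {L j : ℕ}

def prefixExtend (x : Fin (L + 1) → α) (j : ℕ) (e : Fin (L - j) → α) : Fin (L + 1) → α :=
  fun i => if h : (i : ℕ) ≤ j then x i else e ⟨i - (j + 1), by omega⟩

lemma prefixExtend_of_le (x : Fin (L + 1) → α) (e : Fin (L - j) → α) {i : Fin (L + 1)}
    (hi : (i : ℕ) ≤ j) : prefixExtend x j e i = x i :=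
  dif_pos hi

lemma prefixExtend_injective {x : Fin (L + 1) → α} (hx : Function.Injective x)
    {e : Fin (L - j) → α} (he : Function.Injective e)
    (hdisj : ∀ (i : Fin (L + 1)) (k : Fin (L - j)), (i : ℕ) ≤ j → x i ≠ e k) :
    Function.Injective (prefixExtend x j e) := by
  intro i₁ i₂ h
  simp only [prefixExtend] at h
  split_ifs at h with h₁ h₂ h₂
  · exact hx h
  · exact absurd h (hdisj _ _ h₁)
  · exact absurd h.symm (hdisj _ _ h₂)
  · have := congrArg Fin.val (he h)
    simp only at this
    exact Fin.ext (by omega)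

lemma prefixExtend_left_injective (x : Fin (L + 1) → α) (hj : j ≤ L) :
    Function.Injective (prefixExtend x j) := by
  intro e₁ e₂ h
  funext k
  have := congrFun h ⟨j + 1 + k, by omega⟩
  simp only [prefixExtend, dif_neg (show ¬ j + 1 + (k : ℕ) ≤ j by omega),
    add_tsub_cancel_left, Fin.eta] at this
  exact this

theorem descFactorial_le_card_injective_of_prefix_eq [Fintype α] [DecidableEq α]
    {x : Fin (L + 1) → α} (hx : Function.Injective x) (hj : j ≤ L) :
    (Fintype.card α - (j + 1)).descFactorial (L - j) ≤
      #{y : Fin (L + 1) → α |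
        Function.Injective y ∧ ∀ i : Fin (L + 1), (i : ℕ) ≤ j → x i = y i} := by
  set A : Finset α := (Iic (⟨j, by omega⟩ : Fin (L + 1))).image x
  have hA : ∀ i : Fin (L + 1), (i : ℕ) ≤ j → x i ∈ A := fun i hi =>
    mem_image_of_mem x (by simpa [Fin.le_def] using hi)
  have hcardA : Fintype.card {v // v ∉ A} = Fintype.card α - (j + 1) := by
    rw [Fintype.card_subtype_compl, Fintype.card_coe, card_image_of_injective _ hx, Fin.card_Iic]
  let Φ : (Fin (L - j) ↪ {v // v ∉ A}) → Fin (L + 1) → α := fun e => prefixExtend x j ((↑) ∘ e)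
  calc (Fintype.card α - (j + 1)).descFactorial (L - j)
      = #(univ : Finset (Fin (L - j) ↪ {v // v ∉ A})) := by
        rw [card_univ, Fintype.card_embedding_eq, Fintype.card_fin, hcardA]
    _ ≤ _ := by
        refine card_le_card_of_injOn Φ (fun e _ => ?_) ?_
        · refine mem_filter.2 ⟨mem_univ _, ?_, fun i hi => (prefixExtend_of_le x _ hi).symm⟩
          refine prefixExtend_injective hx (Subtype.val_injective.comp e.injective) ?_
          intro i k hi h
          exact (e k).2 (by simpa [h] using hA i hi)
        · intro e₁ _ e₂ _ h
          exact DFunLike.coe_injective <| Subtype.val_injective.comp_left <|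
            prefixExtend_left_injective x hj h

end Prefix

section Staircase

variable {n L : ℕ}

lemma J0_le (x y : Fin (L + 1) → Fin n) : J0 x y ≤ L :=
  Finset.sup_le fun i _ => Nat.lt_succ_iff.mp i.isLt

lemma le_J0_of_prefix_eq {x y : Fin (L + 1) → Fin n} {j : ℕ} (hj : j ≤ L)
    (h : ∀ i : Fin (L + 1), (i : ℕ) ≤ j → x i = y i) : j ≤ J0 x y :=
  Finset.le_sup (f := fun i : Fin (L + 1) => (i : ℕ)) (b := ⟨j, by omega⟩)
    (mem_filter.2 ⟨mem_univ _, fun k hk => h k (Fin.le_def.1 hk)⟩)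

theorem descFactorial_le_card_J0 {x : Fin (L + 1) → Fin n} (hx : Function.Injective x)
    {z : Fin n} (hz : x 0 = z) {j : ℕ} (hj : j ≤ L) :
    (n - (j + 1)).descFactorial (L - j) ≤
      #{y ∈ univ.filter (fun y : Fin (L + 1) → Fin n => y 0 = z) |
        Function.Injective y ∧ j ≤ J0 x y} := by
  refine (Fintype.card_fin n ▸ descFactorial_le_card_injective_of_prefix_eq hx hj).trans
    (card_le_card fun y hy => ?_)
  obtain ⟨hy, hpre⟩ := (mem_filter.1 hy).2
  exact mem_filter.2 ⟨mem_filter.2 ⟨mem_univ _, (hpre 0 (Nat.zero_le _)).symm.trans hz⟩,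
    hy, le_J0_of_prefix_eq hj hpre⟩

lemma pow_J0_succ_le_sum_rstar {x y : Fin (L + 1) → Fin n} (hx : Function.Injective x)
    (hy : Function.Injective y) (b1 : ℤ) :
    (n : ℝ) ^ (J0 x y + 1) ≤ ∑ b2 ∈ ({0, 1} : Finset ℤ), rstar x y b1 b2 := by
  have hne : ∀ b2, b1 ≠ b2 → rstar x y b1 b2 = (n : ℝ) ^ (J0 x y + 1) := fun b2 h => by
    simp [rstar, h, hx, hy]
  have hnonneg : ∀ b2, 0 ≤ rstar x y b1 b2 := fun b2 => by
    unfold rstar; split_ifs <;> positivity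
  rw [sum_pair zero_ne_one]
  rcases eq_or_ne b1 0 with rfl | h
  · linarith [hne 1 zero_ne_one, hnonneg 0]
  · linarith [hne 0 h, hnonneg 1]

lemma sum_range_le_sum_rstar {x : Fin (L + 1) → Fin n} (hx : Function.Injective x)
    (y : Fin (L + 1) → Fin n) (b1 : ℤ) :
    ∑ j ∈ range (L + 1),
        (if Function.Injective y ∧ j ≤ J0 x y then ((n : ℝ) - 1) * n ^ j else 0)
      ≤ ∑ b2 ∈ ({0, 1} : Finset ℤ), rstar x y b1 b2 := by
  by_cases hy : Function.Injective y
  · have hrange : (range (L + 1)).filter (· ≤ J0 x y) = range (J0 x y + 1) := by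
      ext k; simp only [mem_filter, mem_range]; have := J0_le x y; omega
    simp only [hy, true_and]
    rw [← sum_filter, hrange]
    exact (sum_range_sub_one_mul_pow_le _ _).trans (pow_J0_succ_le_sum_rstar hx hy b1)
  · simp [hy, rstar]

end Staircase

lemma pow_mul_sub_le_mul_descFactorial {n L j : ℕ} (hj : j ≤ L) (hLn : L < n) :
    (n : ℝ) ^ L * (n - 1 - (L - j) * L)
      ≤ ((n : ℝ) - 1) * n ^ j * (n - (j + 1)).descFactorial (L - j) := by
  have hn : (1 : ℝ) ≤ n := by exact_mod_cast Nat.one_le_of_lt hLn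
  have hLn' : (L : ℝ) < n := by exact_mod_cast hLn
  have hdesc : ((n : ℝ) - L) ^ (L - j) ≤ (n - (j + 1)).descFactorial (L - j) := by
    have h := Nat.pow_sub_le_descFactorial (n - (j + 1)) (L - j)
    rw [show n - (j + 1) + 1 - (L - j) = n - L by omega] at h
    have h' := Nat.cast_le (α := ℝ).2 h
    push_cast [hLn.le] at h'
    exact h'
  have hbern := pow_mul_sub_le_mul_sub_pow (a := (n : ℝ)) L (by linarith) (by linarith) (L - j)
  rw [Nat.cast_sub hj] at hbern
  have hpow : (n : ℝ) ^ L = n ^ j * n ^ (L - j) := by rw [← pow_add, Nat.add_sub_cancel' hj]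
  have hcoef : (0 : ℝ) ≤ ((n : ℝ) - 1) * n ^ j := mul_nonneg (by linarith) (by positivity)
  have hslack : (0 : ℝ) ≤ n ^ L * ((L - j) * L) :=
    mul_nonneg (by positivity) (mul_nonneg (by simp [hj]) (by positivity))
  refine le_of_mul_le_mul_left ?_ (by linarith : (0 : ℝ) < n)
  calc (n : ℝ) * (n ^ L * (n - 1 - (L - j) * L))
      = ((n : ℝ) - 1) * n ^ j * (n ^ (L - j) * (n - (L - j) * L)) - n ^ L * ((L - j) * L) := by
        rw [hpow]; ring
    _ ≤ ((n : ℝ) - 1) * n ^ j * (n * (n - L) ^ (L - j)) := by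
        linarith [mul_le_mul_of_nonneg_left hbern hcoef]
    _ ≤ n * (((n : ℝ) - 1) * n ^ j * (n - (j + 1)).descFactorial (L - j)) := by
        rw [mul_left_comm]; gcongr

lemma sum_range_pow_mul_sub (a : ℝ) (L : ℕ) :
    ∑ j ∈ range (L + 1), a ^ L * (a - 1 - (L - j) * L)
      = (L + 1) * a ^ L * (a - 1 - L ^ 2 / 2) := by
  have hgauss : ∑ j ∈ range (L + 1), (j : ℝ) = L * (L + 1) / 2 := by
    induction L with
    | zero => simp
    | succ k ih => rw [sum_range_succ, ih]; push_cast; ring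
  simp only [← mul_sum, sum_sub_distrib, ← sum_mul, hgauss, sum_const, card_range, nsmul_eq_mul]
  push_cast
  ring

lemma one_div_two_exp_mul_pow_le {a : ℝ} {L : ℕ} (ha : 4 ≤ a) (hL : (L : ℝ) ^ 2 ≤ a) :
    1 / (2 * Real.exp 1) * ((L : ℝ) + 1) * a ^ (L + 1) ≤ (L + 1) * a ^ L * (a - 1 - L ^ 2 / 2) := by
  have hexp : 1 / (2 * Real.exp 1) ≤ 1 / 4 := by
    gcongr; linarith [Real.add_one_le_exp 1]
  have hc : 0 ≤ ((L : ℝ) + 1) * a ^ L := by positivity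
  calc 1 / (2 * Real.exp 1) * ((L : ℝ) + 1) * a ^ (L + 1)
      = 1 / (2 * Real.exp 1) * a * ((L + 1) * a ^ L) := by ring
    _ ≤ 1 / 4 * a * ((L + 1) * a ^ L) := by gcongr
    _ ≤ _ := by rw [mul_comm]; gcongr; linarith

theorem stmt3 {n L : ℕ} (hn : 4 ≤ n) (hLn : (L : ℝ) ≤ Real.sqrt n)
    (x : Fin (L + 1) → Fin n) (hx1 : x 0 = ⟨0, by omega⟩)
    (hxgood : Function.Injective x)
    (b1 : ℤ) :
    (1 / (2 * Real.exp 1)) * ((L : ℝ) + 1) * (n : ℝ) ^ (L + 1)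
      ≤ ∑ y ∈ Finset.univ.filter (fun y : Fin (L + 1) → Fin n => y 0 = (⟨0, by omega⟩ : Fin n)),
          ∑ b2 ∈ ({0, 1} : Finset ℤ), rstar x y b1 b2 := by
  have hn4 : (4 : ℝ) ≤ n := by exact_mod_cast hn
  have hL2 : (L : ℝ) ^ 2 ≤ n := (Real.le_sqrt (by positivity) (by positivity)).1 hLn
  have hLlt : L < n := by exact_mod_cast (show (L : ℝ) < n by nlinarith)
  calc (1 / (2 * Real.exp 1)) * ((L : ℝ) + 1) * (n : ℝ) ^ (L + 1)
      ≤ (L + 1) * (n : ℝ) ^ L * (n - 1 - L ^ 2 / 2) := one_div_two_exp_mul_pow_le hn4 hL2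
    _ = ∑ j ∈ range (L + 1), (n : ℝ) ^ L * (n - 1 - (L - j) * L) :=
        (sum_range_pow_mul_sub _ _).symm
    _ ≤ ∑ j ∈ range (L + 1), ((n : ℝ) - 1) * n ^ j * (n - (j + 1)).descFactorial (L - j) :=
        sum_le_sum fun j hj =>
          pow_mul_sub_le_mul_descFactorial (Nat.lt_succ_iff.1 (mem_range.1 hj)) hLlt
    _ ≤ ∑ j ∈ range (L + 1), ((n : ℝ) - 1) * n ^ j *
          #{y ∈ univ.filter (fun y : Fin (L + 1) → Fin n => y 0 = ⟨0, by omega⟩) |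
            Function.Injective y ∧ j ≤ J0 x y} := by
        gcongr with j hj
        · exact mul_nonneg (by linarith) (by positivity)
        · exact_mod_cast descFactorial_le_card_J0 hxgood hx1 (Nat.lt_succ_iff.1 (mem_range.1 hj))
    _ = ∑ y ∈ univ.filter (fun y : Fin (L + 1) → Fin n => y 0 = ⟨0, by omega⟩),
          ∑ j ∈ range (L + 1),
            (if Function.Injective y ∧ j ≤ J0 x y then ((n : ℝ) - 1) * n ^ j else 0) := by
        rw [sum_comm]
        refine sum_congr rfl fun j _ => ?_
        rw [← sum_filter, sum_const, nsmul_eq_mul, mul_comm]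
    _ ≤ _ := sum_le_sum fun y _ => sum_range_le_sum_rstar hxgood y b1
end

section
/- Let G be a connected undirected graph on [n], let P be an all-pairs set of paths for G with vertex congestion g, and let L≥2 be an integer. For all x,y∈{1}×[n]^L, all b1,b2∈{0,1}, and every vertex v∈[n] with g_{x,b1}(v)≠g_{y,b2}(v), one has r'(g_{x,b1},g_{y,b2},v)·r'(g_{y,b2},g_{x,b1},v) ≥ r(g_{x,b1},g_{y,b2})². -/
open Finset

lemma J0_comm {n L : ℕ} (x y : Fin (L + 1) → Fin n) : J0 x y = J0 y x := by
  simp only [J0, eq_comm (a := x _)]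

lemma rstar_comm {n L : ℕ} (x y : Fin (L + 1) → Fin n) (b1 b2 : ℤ) :
    rstar x y b1 b2 = rstar y x b2 b1 := by
  simp only [rstar, J0_comm x y, eq_comm (a := b1), or_comm (a := ¬ Function.Injective x)]

lemma rrel_comm {n L : ℕ} (x y : Fin (L + 1) → Fin n) (b1 b2 : ℤ) :
    rrel x y b1 b2 = rrel y x b2 b1 := by
  simp only [rrel, eq_comm (a := x), rstar_comm x y]

lemma PathSystem.congestion_pos {n : ℕ} {G : SimpleGraph (Fin n)} (P : PathSystem G)
    (w : Fin n) : 0 < P.congestion :=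
  calc 0 < (P.path w w).support.count w := by simp [P.diag]
    _ ≤ ∑ v, (P.path w v).support.count w :=
        single_le_sum (f := fun v => (P.path w v).support.count w) (by simp) (mem_univ w)
    _ ≤ ∑ u, ∑ v, (P.path u v).support.count w :=
        single_le_sum (f := fun u => ∑ v, (P.path u v).support.count w) (by simp) (mem_univ w)
    _ ≤ P.congestion :=
        le_sup (f := fun w => ∑ u, ∑ v, (P.path u v).support.count w) (mem_univ w)

/-- `J` and `r` are symmetric, so the tail case `g / n^1.5` of one direction meets the case
`n^1.5 / g` of the other and the product is exactly `r²`. -/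
theorem rprime_mul_rprime_comm {n L : ℕ} {G : SimpleGraph (Fin n)} (P : PathSystem G)
    {g : ℕ} (hg : g ≠ 0) (x y : Fin (L + 1) → Fin n) (b1 b2 : ℤ) (v : Fin n)
    (hv : gS P x b1 v ≠ gS P y b2 v) :
    rprime P g x y b1 b2 v * rprime P g y x b2 b1 v = rrel x y b1 b2 ^ 2 := by
  obtain rfl | hb := eq_or_ne b1 b2
  · simp [rprime, rrel, rstar]
  have hN : (n : ℝ) ^ (1.5 : ℝ) ≠ 0 := by
    have := v.pos
    positivity
  have hg' : (g : ℝ) ≠ 0 := by exact_mod_cast hg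
  simp only [rprime, J0_comm y x, ← rrel_comm x y, hv, hv.symm, hb, hb.symm, or_self,
    if_false]
  by_cases hx : v ∈ tailSupport P x (J0 x y) <;> by_cases hy : v ∈ tailSupport P y (J0 x y) <;>
    simp only [hx, hy, not_true, not_false_eq_true, and_self, and_true, and_false, if_true,
      if_false] <;> field_simp

theorem stmt5 {n L g : ℕ}
    (G : SimpleGraph (Fin n))
    (P : PathSystem G) (hg : P.congestion = g)
    (x y : Fin (L + 1) → Fin n)
    (b1 b2 : ℤ)
    (v : Fin n) (hv : gS P x b1 v ≠ gS P y b2 v) :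
    rrel x y b1 b2 ^ 2 ≤ rprime P g x y b1 b2 v * rprime P g y x b2 b1 v :=
  (rprime_mul_rprime_comm P (hg ▸ (P.congestion_pos v).ne') x y b1 b2 v hv).ge
end

section
/- Let G be a connected undirected graph on [n], let P be an all-pairs set of paths for G, and let L≥2 be an integer. For every x∈{1}×[n]^L, the function f_x has exactly one local minimum, namely the vertex x_{L+1}. -/
open Finset

/-
On the staircase, `f_x(v) = -i·n - j` where `v` sits at position `j` of `P^{x_i,x_{i+1}}`, the
last segment containing it. As `j ≤ n`, this value strictly decreases in the lexicographic order of
`(i, j)`. Hence a staircase vertex other than `x_{L+1}` has a neighbour, the next vertex of its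
last segment, with a smaller value, while `x_{L+1}`, the last vertex of the last segment, is a
global minimum. Off the staircase `f_x` is the distance to `x_1 ∈ S_x`, which drops along a
shortest path, and every staircase value is negative.
-/

namespace SimpleGraph

variable {V : Type*} {G : SimpleGraph V}

theorem Walk.IsPath.exists_adj_idxOf_eq_succ [DecidableEq V] {a b v : V} {w : G.Walk a b}
    (hw : w.IsPath) (hv : v ∈ w.support) (hvb : v ≠ b) :
    ∃ u ∈ w.support, G.Adj v u ∧ w.support.idxOf u = w.support.idxOf v + 1 := by
  set k := w.support.idxOf v
  have hk : k < w.length := by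
    have : k < w.length + 1 := w.length_support ▸ List.idxOf_lt_length_of_mem hv
    refine lt_of_le_of_ne (by omega) fun hkl => hvb ?_
    calc v = w.getVert k := (w.getVert_support_idxOf hv).symm
      _ = b := by rw [hkl, w.getVert_length]
  refine ⟨w.getVert (k + 1), w.getVert_mem_support _, ?_, ?_⟩
  · simpa [k, w.getVert_support_idxOf hv] using w.adj_getVert_succ hk
  · rw [w.getVert_eq_support_getElem hk]
    exact hw.support_nodup.idxOf_getElem _ _

theorem Walk.IsPath.idxOf_le_idxOf_end [DecidableEq V] {a b v : V} {w : G.Walk a b}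
    (hw : w.IsPath) (hv : v ∈ w.support) :
    w.support.idxOf v ≤ w.support.idxOf b := by
  have hb : w.support.idxOf b = w.length := by
    simpa using hw.support_nodup.idxOf_getElem w.length (by simp)
  have := w.length_support ▸ List.idxOf_lt_length_of_mem hv
  omega

theorem Connected.exists_adj_dist_lt (hG : G.Connected) {v a : V} (hva : v ≠ a) :
    ∃ w, G.Adj v w ∧ G.dist w a < G.dist v a := by
  obtain ⟨p, hp⟩ := (hG.preconnected v a).exists_walk_length_eq_dist
  obtain ⟨w, hvw, q, rfl⟩ := Walk.exists_eq_cons_of_ne hva p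
  refine ⟨w, hvw, ?_⟩
  have := dist_le q
  rw [Walk.length_cons] at hp
  omega

end SimpleGraph

def stairValue (n i j : ℕ) : ℤ := -((i + 1) * n) - (j + 1)

theorem stairValue_neg (n i j : ℕ) : stairValue n i j < 0 := by
  have : (0 : ℤ) ≤ (i + 1) * n := by positivity
  unfold stairValue
  omega

theorem stairValue_lt_stairValue {n i i' j j' : ℕ} (hj : j < n) (h : i < i' ∨ i = i' ∧ j < j') :
    stairValue n i' j' < stairValue n i j := by
  unfold stairValue
  rcases h with h | ⟨rfl, h⟩
  · have : ((i : ℤ) + 2) * n ≤ (i' + 1) * n :=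
      mul_le_mul_of_nonneg_right (by omega) (by positivity)
    have : (j : ℤ) < n := by exact_mod_cast hj
    linarith
  · omega

theorem stairValue_le_stairValue {n i i' j j' : ℕ} (hj : j < n) (h : i < i' ∨ i = i' ∧ j ≤ j') :
    stairValue n i' j' ≤ stairValue n i j := by
  rcases h with h | ⟨rfl, h⟩
  · exact (stairValue_lt_stairValue hj (.inl h)).le
  · unfold stairValue
    omega

section Staircase

variable {n L : ℕ} {G : SimpleGraph (Fin n)} (P : PathSystem G) (x : Fin (L + 1) → Fin n)

theorem segSupport_of_lt {i : ℕ} (hi : i < L) :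
    segSupport P x i = (P.path (x ⟨i, by omega⟩) (x ⟨i + 1, by omega⟩)).support := by
  unfold segSupport
  congr 4 <;> omega

theorem idxOf_segSupport_lt {v : Fin n} {i : ℕ} (hv : v ∈ segSupport P x i) :
    (segSupport P x i).idxOf v < n := by
  have hlen : (segSupport P x i).length ≤ n :=
    (P.isPath _ _).support_nodup.length_le_card.trans_eq (Fintype.card_fin n)
  exact (List.idxOf_lt_length_of_mem hv).trans_le hlen

theorem start_mem_segSupport {i : ℕ} (hi : i < L) : x ⟨i, by omega⟩ ∈ segSupport P x i := by
  rw [segSupport_of_lt P x hi]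
  exact SimpleGraph.Walk.start_mem_support _

theorem end_mem_segSupport {i : ℕ} (hi : i < L) : x ⟨i + 1, by omega⟩ ∈ segSupport P x i := by
  rw [segSupport_of_lt P x hi]
  exact SimpleGraph.Walk.end_mem_support _

theorem mem_stairSupportFrom_zero_iff_tail {v : Fin n} :
    v ∈ stairSupportFrom P x 0 ↔ v = x 0 ∨ ∃ i < L, v ∈ (segSupport P x i).tail := by
  simp only [stairSupportFrom, List.mem_cons, List.mem_flatten, List.mem_ofFn]
  refine or_congr (by simp) ⟨fun ⟨_, ⟨a, rfl⟩, ha⟩ => ⟨a, a.2, ?_⟩,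
    fun ⟨i, hi, hv⟩ => ⟨_, ⟨⟨i, hi⟩, rfl⟩, ?_⟩⟩
  · rw [segSupport_of_lt P x a.2]
    convert ha using 5 <;> simp
  · rw [segSupport_of_lt P x hi] at hv
    convert hv using 5 <;> simp

theorem vertex_mem_stairSupportFrom_zero {k : ℕ} (hk : k < L + 1) :
    x ⟨k, hk⟩ ∈ stairSupportFrom P x 0 := by
  induction k with
  | zero => exact (mem_stairSupportFrom_zero_iff_tail P x).2 (.inl rfl)
  | succ k ih =>
    have hend := end_mem_segSupport P x (i := k) (by omega)
    rw [segSupport_of_lt P x (by omega), ← SimpleGraph.Walk.cons_tail_support,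
      List.mem_cons] at hend
    rcases hend with h | h
    · exact h ▸ ih (by omega)
    · exact (mem_stairSupportFrom_zero_iff_tail P x).2
        (.inr ⟨k, by omega, by rwa [segSupport_of_lt P x (by omega)]⟩)

theorem mem_stairSupportFrom_zero_iff (hL : 0 < L) {v : Fin n} :
    v ∈ stairSupportFrom P x 0 ↔ ∃ i < L, v ∈ segSupport P x i := by
  rw [mem_stairSupportFrom_zero_iff_tail]
  constructor
  · rintro (rfl | ⟨i, hi, hv⟩)
    · exact ⟨0, hL, start_mem_segSupport P x hL⟩
    · exact ⟨i, hi, List.mem_of_mem_tail hv⟩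
  · rintro ⟨i, hi, hv⟩
    rw [segSupport_of_lt P x hi, ← SimpleGraph.Walk.cons_tail_support, List.mem_cons] at hv
    rcases hv with rfl | hv
    · exact (mem_stairSupportFrom_zero_iff_tail P x).1 (vertex_mem_stairSupportFrom_zero P x _)
    · exact .inr ⟨i, hi, by rwa [segSupport_of_lt P x hi]⟩

theorem maxSegIdx_lt_and_mem {v : Fin n} (h : ∃ i < L, v ∈ segSupport P x i) :
    maxSegIdx P x v < L ∧ v ∈ segSupport P x (maxSegIdx P x v) := by
  obtain ⟨i, hi, hv⟩ := h
  obtain ⟨m, hm, hmax⟩ := Finset.exists_mem_eq_sup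
    ((Finset.range L).filter fun i => v ∈ segSupport P x i) ⟨i, by simp [hi, hv]⟩ id
  have hm' := Finset.mem_filter.1 hm
  have hmax' : maxSegIdx P x v = m := hmax
  exact hmax' ▸ ⟨Finset.mem_range.1 hm'.1, hm'.2⟩

theorem le_maxSegIdx {v : Fin n} {i : ℕ} (hi : i < L) (hv : v ∈ segSupport P x i) :
    i ≤ maxSegIdx P x v :=
  Finset.le_sup (f := id) (by simp [hi, hv])

theorem fS_of_mem {v : Fin n} (hv : v ∈ stairSupportFrom P x 0) :
    fS P x v = stairValue n (maxSegIdx P x v) ((segSupport P x (maxSegIdx P x v)).idxOf v) := by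
  rw [fS, if_pos hv, stairValue]

theorem fS_of_not_mem {v : Fin n} (hv : v ∉ stairSupportFrom P x 0) :
    fS P x v = G.dist v (x 0) := by
  rw [fS, if_neg hv]

theorem fS_last_le (hL : 0 < L) (u : Fin n) : fS P x (x (Fin.last L)) ≤ fS P x u := by
  have hlast : x (Fin.last L) = x ⟨L - 1 + 1, by omega⟩ := congrArg x (Fin.ext (by simp; omega))
  have hmem : x (Fin.last L) ∈ segSupport P x (L - 1) :=
    hlast ▸ end_mem_segSupport P x (by omega)
  have hstair : x (Fin.last L) ∈ stairSupportFrom P x 0 :=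
    (mem_stairSupportFrom_zero_iff P x hL).2 ⟨L - 1, by omega, hmem⟩
  have hmax : maxSegIdx P x (x (Fin.last L)) = L - 1 :=
    le_antisymm (by have := (maxSegIdx_lt_and_mem P x ⟨_, by omega, hmem⟩).1; omega)
      (le_maxSegIdx P x (by omega) hmem)
  rw [fS_of_mem P x hstair, hmax]
  by_cases hu : u ∈ stairSupportFrom P x 0
  · obtain ⟨huL, hu'⟩ := maxSegIdx_lt_and_mem P x ((mem_stairSupportFrom_zero_iff P x hL).1 hu)
    rw [fS_of_mem P x hu]
    refine stairValue_le_stairValue (idxOf_segSupport_lt P x hu') ?_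
    rcases (show maxSegIdx P x u ≤ L - 1 by omega).lt_or_eq with h | h
    · exact .inl h
    · refine .inr ⟨h, ?_⟩
      rw [h, segSupport_of_lt P x (by omega)] at hu' ⊢
      rw [hlast]
      exact (P.isPath _ _).idxOf_le_idxOf_end hu'
  · rw [fS_of_not_mem P x hu]
    exact (stairValue_neg _ _ _).le.trans (by positivity)

theorem exists_adj_fS_lt_of_mem (hL : 0 < L) {v : Fin n} (hv : v ∈ stairSupportFrom P x 0)
    (hvL : v ≠ x (Fin.last L)) : ∃ u, G.Adj v u ∧ fS P x u < fS P x v := by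
  obtain ⟨hiL, hvi⟩ := maxSegIdx_lt_and_mem P x ((mem_stairSupportFrom_zero_iff P x hL).1 hv)
  rw [fS_of_mem P x hv]
  set i := maxSegIdx P x v
  have hend : v ≠ x ⟨i + 1, by omega⟩ := by
    -- `x_{i+1}` also starts segment `i + 1`, against the maximality of `i`
    intro hvx
    rcases (show i + 1 ≤ L by omega).lt_or_eq with h | h
    · have := le_maxSegIdx P x h (hvx ▸ start_mem_segSupport P x h)
      omega
    · exact hvL (hvx.trans (congrArg x (Fin.ext h)))
  rw [segSupport_of_lt P x hiL] at hvi
  obtain ⟨u, hu, hvu, hidx⟩ := (P.isPath _ _).exists_adj_idxOf_eq_succ hvi hend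
  rw [← segSupport_of_lt P x hiL] at hvi hu hidx
  have hustair : u ∈ stairSupportFrom P x 0 :=
    (mem_stairSupportFrom_zero_iff P x hL).2 ⟨i, hiL, hu⟩
  refine ⟨u, hvu, ?_⟩
  rw [fS_of_mem P x hustair]
  refine stairValue_lt_stairValue (idxOf_segSupport_lt P x hvi) ?_
  rcases (le_maxSegIdx P x hiL hu).lt_or_eq with h | h
  · exact .inl h
  · exact .inr ⟨h, by rw [← h, hidx]; omega⟩

theorem exists_adj_fS_lt_of_not_mem (hG : G.Connected) {v : Fin n}
    (hv : v ∉ stairSupportFrom P x 0) : ∃ u, G.Adj v u ∧ fS P x u < fS P x v := by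
  have hx0 : v ≠ x 0 := fun h => hv (h ▸ vertex_mem_stairSupportFrom_zero P x _)
  obtain ⟨u, hvu, hdist⟩ := hG.exists_adj_dist_lt hx0
  refine ⟨u, hvu, ?_⟩
  rw [fS_of_not_mem P x hv]
  by_cases hu : u ∈ stairSupportFrom P x 0
  · rw [fS_of_mem P x hu]
    exact (stairValue_neg _ _ _).trans_le (by positivity)
  · rw [fS_of_not_mem P x hu]
    exact_mod_cast hdist

end Staircase

theorem stmt7 {n L : ℕ} (hL : 2 ≤ L)
    (G : SimpleGraph (Fin n)) (hG : G.Connected) (P : PathSystem G)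
    (x : Fin (L + 1) → Fin n) :
    ∀ v : Fin n, (∀ u : Fin n, G.Adj u v → fS P x v ≤ fS P x u) ↔ v = x (Fin.last L) := by
  intro v
  refine ⟨fun hmin => ?_, fun hv u _ => hv ▸ fS_last_le P x (by omega) u⟩
  by_contra hvL
  obtain ⟨u, hvu, hlt⟩ : ∃ u, G.Adj v u ∧ fS P x u < fS P x v := by
    by_cases hv : v ∈ stairSupportFrom P x 0
    · exact exists_adj_fS_lt_of_mem P x (by omega) hv hvL
    · exact exists_adj_fS_lt_of_not_mem P x hG hv
  exact (hmin u hvu.symm).not_gt hlt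
end

section
/- Let G be a connected undirected graph on [n], let P be an all-pairs set of paths for G, and let L≥2 be an integer. For every x∈{1}×[n]^L and every vertex v∈[n] that does not appear in the staircase S_x, the vertex v is not a local minimum of f_x; i.e., v has a neighbor u in G with f_x(u)<f_x(v). -/
open Finset

/-!
Off the staircase, `f_x` is the distance to `x_1`, which is itself on the staircase and hence
distinct from `v`. The neighbour of `v` on a shortest path to `x_1` either lies on the
staircase, where `f_x` is negative, or is strictly closer to `x_1`.
-/

namespace SimpleGraph

variable {V : Type*} {G : SimpleGraph V} {v w : V}

theorem Reachable.exists_adj_dist_lt (h : G.Reachable v w) (hne : v ≠ w) :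
    ∃ u, G.Adj v u ∧ G.dist u w < G.dist v w := by
  obtain ⟨p, hp⟩ := h.exists_walk_length_eq_dist
  cases p with
  | nil => exact absurd rfl hne
  | @cons _ u _ hadj q =>
    refine ⟨u, hadj, ?_⟩
    have := dist_le q
    rw [Walk.length_cons] at hp
    omega

end SimpleGraph

section Staircase

variable {n L : ℕ} {G : SimpleGraph (Fin n)} (P : PathSystem G) (x : Fin (L + 1) → Fin n)

theorem apply_zero_mem_stairSupportFrom_zero : x 0 ∈ stairSupportFrom P x 0 :=
  List.mem_cons_self

variable {P x} {v : Fin n}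

theorem fS_neg_of_mem (hv : v ∈ stairSupportFrom P x 0) : fS P x v < 0 := by
  rw [fS, if_pos hv]
  have : (0 : ℤ) ≤ ((maxSegIdx P x v : ℤ) + 1) * n := by positivity
  omega

theorem fS_of_notMem (hv : v ∉ stairSupportFrom P x 0) : fS P x v = G.dist v (x 0) := by
  rw [fS, if_neg hv]

end Staircase

theorem stmt8 {n L : ℕ}
    (G : SimpleGraph (Fin n)) (hG : G.Connected) (P : PathSystem G)
    (x : Fin (L + 1) → Fin n)
    (v : Fin n) (hv : v ∉ stairSupportFrom P x 0) :
    ∃ u : Fin n, G.Adj u v ∧ fS P x u < fS P x v := by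
  have hne : v ≠ x 0 := fun h => hv (h ▸ apply_zero_mem_stairSupportFrom_zero P x)
  obtain ⟨u, hadj, hcloser⟩ := (hG.preconnected v (x 0)).exists_adj_dist_lt hne
  refine ⟨u, hadj.symm, ?_⟩
  rw [fS_of_notMem hv]
  by_cases hu : u ∈ stairSupportFrom P x 0
  · exact (fS_neg_of_mem hu).trans_le (Int.natCast_nonneg _)
  · rw [fS_of_notMem hu]
    exact_mod_cast hcloser
end
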